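/- Let α ∈ (0,1), let F be a cumulative distribution function with ∫_{−∞}^0 F(y) dy < ∞ that satisfies the quantile growth condition at level α with constants b_α > 0 and M_α > 0, and let G be a cumulative distribution function with ∫_{−∞}^0 G(y) dy < ∞ and sup_y |F(y) − G(y)| < M_α. Then | CVaR_α(G) − CVaR_α(F) + (1/α)∫_{−∞}^{VaR_α(F)} (G(y) − F(y)) dy | ≤ (b_α/α) · (sup_y |F(y) − G(y)|)²; that is, CVaR is smooth at F with first-order (linear) term G ↦ (1/α)∫_{−∞}^{VaR_α(F)} (F(y) − G(y)) dy and quadratic residual. -/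

import Mathlib

/-!
Write `v = VaR_α(F)`, `w = VaR_α(G)` and `ε = sup |F - G|`. The residual equals
`(1/α) ∫_v^w (α - G)`. Between `v` and `w` the values `F(y)` and `G(y)` lie on opposite sides
of `α`, so the integrand is bounded by `ε`; and the quantile growth condition converts the
perturbation `ε` of the CDF into `|w - v| ≤ b_α ε`. Together these give `b_α ε² / α`.
-/

open MeasureTheory

/-- A cumulative distribution function: nondecreasing, right-continuous,
tending to `0` at `−∞` and to `1` at `+∞`. -/
def IsCDF (F : ℝ → ℝ) : Prop :=
  Monotone F ∧ (∀ y : ℝ, ContinuousWithinAt F (Set.Ici y) y) ∧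
    Filter.Tendsto F Filter.atBot (nhds 0) ∧ Filter.Tendsto F Filter.atTop (nhds 1)

/-- Value-at-risk at level `α`: `VaR_α(F) = inf{ y : F y ≥ α }`. -/
noncomputable def VaR (α : ℝ) (F : ℝ → ℝ) : ℝ :=
  sInf {y : ℝ | α ≤ F y}

/-- Conditional value-at-risk at level `α`:
`CVaR_α(F) = VaR_α(F) − (1/α) ∫_{−∞}^{VaR_α(F)} F(y) dy`. -/
noncomputable def CVaR (α : ℝ) (F : ℝ → ℝ) : ℝ :=
  VaR α F - (1 / α) * ∫ y in Set.Iio (VaR α F), F y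

/-- `F` satisfies the quantile growth condition at level `α` with constants
`b, M`: `|F(VaR_α(F) + b·y) − α| ≥ |y|` for all `y ∈ [−M, M]`. -/
def QuantileGrowth (α : ℝ) (F : ℝ → ℝ) (b M : ℝ) : Prop :=
  ∀ y ∈ Set.Icc (-M) M, |y| ≤ |F (VaR α F + b * y) - α|

open Set Filter Topology

namespace IsCDF

variable {α : ℝ} {F G : ℝ → ℝ}

lemma nonneg (hF : IsCDF F) (y : ℝ) : 0 ≤ F y :=
  le_of_tendsto hF.2.2.1 (eventually_atBot.2 ⟨y, fun _ hx => hF.1 hx⟩)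

lemma le_one (hF : IsCDF F) (y : ℝ) : F y ≤ 1 :=
  ge_of_tendsto hF.2.2.2 (eventually_atTop.2 ⟨y, fun _ hx => hF.1 hx⟩)

lemma bddAbove_range_abs_sub (hF : IsCDF F) (hG : IsCDF G) :
    BddAbove (range fun y => |F y - G y|) := by
  refine ⟨1, forall_mem_range.2 fun y => abs_le.2 ⟨?_, ?_⟩⟩ <;>
    linarith [hF.nonneg y, hF.le_one y, hG.nonneg y, hG.le_one y]

lemma nonempty_setOf_le (hF : IsCDF F) (hα : α < 1) : {y | α ≤ F y}.Nonempty :=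
  (hF.2.2.2.eventually (eventually_ge_nhds hα)).exists

lemma bddBelow_setOf_le (hF : IsCDF F) (hα : 0 < α) : BddBelow {y | α ≤ F y} := by
  obtain ⟨y₀, hy₀⟩ := eventually_atBot.1 (hF.2.2.1.eventually (eventually_lt_nhds hα))
  exact ⟨y₀, fun y hy => le_of_not_gt fun hlt => (hy₀ y hlt.le).not_ge hy⟩

lemma le_apply_iff_VaR_le (hF : IsCDF F) (hα : α ∈ Ioo 0 1) {x : ℝ} :
    α ≤ F x ↔ VaR α F ≤ x := by
  have hbdd := hF.bddBelow_setOf_le hα.1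
  refine ⟨fun hx => csInf_le hbdd hx, fun hx => le_trans ?_ (hF.1 hx)⟩
  have hright : Tendsto F (𝓝[>] (VaR α F)) (𝓝 (F (VaR α F))) :=
    (hF.2.1 _).mono_left (nhdsWithin_mono _ Ioi_subset_Ici_self)
  refine ge_of_tendsto hright (eventually_nhdsWithin_of_forall fun t ht => ?_)
  obtain ⟨y, hy, hyt⟩ := (csInf_lt_iff hbdd (hF.nonempty_setOf_le hα.2)).1 ht
  exact hy.trans (hF.1 hyt.le)

end IsCDF

lemma Monotone.integrableOn_Iio_of_integrableOn_Iic {F : ℝ → ℝ} (hF : Monotone F) {a : ℝ}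
    (ha : IntegrableOn F (Iic a)) (b : ℝ) : IntegrableOn F (Iio b) := by
  refine (ha.union ((hF.monotoneOn _).integrableOn_isCompact (isCompact_Icc (a := a) (b := b))))
    |>.mono_set fun x hx => ?_
  rcases le_or_gt x a with h | h
  exacts [Or.inl h, Or.inr ⟨h.le, le_of_lt hx⟩]

lemma CVaR_sub_CVaR_add_integral_eq {α : ℝ} (hα : α ≠ 0) {F G : ℝ → ℝ}
    (hF : IntegrableOn F (Iio (VaR α F))) (hG : Monotone G) (hGint : ∀ b, IntegrableOn G (Iio b)) :
    CVaR α G - CVaR α F + (1 / α) * ∫ y in Iio (VaR α F), (G y - F y) =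
      (1 / α) * ∫ y in VaR α F..VaR α G, (α - G y) := by
  rw [intervalIntegral.integral_sub intervalIntegrable_const (hG.intervalIntegrable),
    intervalIntegral.integral_const, ← intervalIntegral.integral_Iio_sub_Iio' (hGint _) (hGint _),
    integral_sub (hGint _) hF, CVaR, CVaR]
  field_simp
  ring

lemma abs_sub_le_abs_sub_of_not_iff {a b c : ℝ} (h : ¬(c ≤ a ↔ c ≤ b)) : |c - b| ≤ |a - b| := by
  grind [abs_le, le_abs_self, neg_abs_le]

/-- Between the two quantiles `F` and `G` lie on opposite sides of `α`. -/
lemma IsCDF.abs_integral_VaR_VaR_le {α ε : ℝ} {F G : ℝ → ℝ} (hF : IsCDF F) (hG : IsCDF G)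
    (hα : α ∈ Ioo 0 1) (hFG : ∀ y, |F y - G y| ≤ ε) :
    |∫ y in VaR α F..VaR α G, (α - G y)| ≤ ε * |VaR α G - VaR α F| := by
  have hbound : ∀ᵐ x, x ∈ uIoc (VaR α F) (VaR α G) → ‖α - G x‖ ≤ ε := by
    filter_upwards [volume.ae_ne (max (VaR α F) (VaR α G))] with x hmax hx
    refine (abs_sub_le_abs_sub_of_not_iff ?_).trans (hFG x)
    rw [hF.le_apply_iff_VaR_le hα, hG.le_apply_iff_VaR_le hα]
    rw [uIoc, mem_Ioc] at hx
    grind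
  exact intervalIntegral.norm_integral_le_of_norm_le_const_ae hbound

namespace QuantileGrowth

variable {α b M ε : ℝ} {F G : ℝ → ℝ}

lemma VaR_le_add (hgrowth : QuantileGrowth α F b M) (hF : IsCDF F) (hG : IsCDF G)
    (hα : α ∈ Ioo 0 1) (hb : 0 < b) (hFG : ∀ y, |F y - G y| ≤ ε) (hεM : ε < M) :
    VaR α G ≤ VaR α F + b * ε := by
  have hε : 0 ≤ ε := (abs_nonneg _).trans (hFG 0)
  have hgr := hgrowth ε ⟨by linarith, hεM.le⟩
  have hFα : α ≤ F (VaR α F + b * ε) := (hF.le_apply_iff_VaR_le hα).2 (by nlinarith)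
  rw [abs_of_nonneg hε, abs_of_nonneg (sub_nonneg.2 hFα)] at hgr
  refine (hG.le_apply_iff_VaR_le hα).1 ?_
  linarith [(abs_le.1 (hFG (VaR α F + b * ε))).2]

/-- Growth at `-δ` pushes `G (VaR α F - b * δ)` strictly below `α` only for `δ > ε`,
so the bound is reached in the limit `δ → ε`. -/
lemma sub_le_VaR (hgrowth : QuantileGrowth α F b M) (hF : IsCDF F) (hG : IsCDF G)
    (hα : α ∈ Ioo 0 1) (hb : 0 < b) (hFG : ∀ y, |F y - G y| ≤ ε) (hεM : ε < M) :
    VaR α F - b * ε ≤ VaR α G := by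
  have hε : 0 ≤ ε := (abs_nonneg _).trans (hFG 0)
  have hlim : Tendsto (fun δ => VaR α F - b * δ) (𝓝[>] ε) (𝓝 (VaR α F - b * ε)) :=
    ((continuous_const.sub (continuous_const.mul continuous_id)).tendsto ε).mono_left
      nhdsWithin_le_nhds
  refine le_of_tendsto hlim ?_
  filter_upwards [Ioo_mem_nhdsGT hεM] with δ ⟨hεδ, hδM⟩
  have hgr := hgrowth (-δ) ⟨by linarith, by linarith⟩
  rw [mul_neg, ← sub_eq_add_neg] at hgr
  have hFα : F (VaR α F - b * δ) < α :=
    lt_of_not_ge fun h => by nlinarith [(hF.le_apply_iff_VaR_le hα).1 h]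
  rw [abs_neg, abs_of_pos (hε.trans_lt hεδ), abs_of_neg (sub_neg.2 hFα)] at hgr
  have hGα : G (VaR α F - b * δ) < α := by
    linarith [(abs_le.1 (hFG (VaR α F - b * δ))).1]
  exact (lt_of_not_ge fun h => hGα.not_ge ((hG.le_apply_iff_VaR_le hα).2 h)).le

lemma abs_VaR_sub_VaR_le (hgrowth : QuantileGrowth α F b M) (hF : IsCDF F) (hG : IsCDF G)
    (hα : α ∈ Ioo 0 1) (hb : 0 < b) (hFG : ∀ y, |F y - G y| ≤ ε) (hεM : ε < M) :
    |VaR α G - VaR α F| ≤ b * ε :=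
  abs_sub_le_iff.2 ⟨by linarith [hgrowth.VaR_le_add hF hG hα hb hFG hεM],
    by linarith [hgrowth.sub_le_VaR hF hG hα hb hFG hεM]⟩

end QuantileGrowth

theorem CVaR_smoothness_general (α : ℝ) (hα : α ∈ Set.Ioo (0 : ℝ) 1)
    (F : ℝ → ℝ) (hF : IsCDF F) (hIntF : IntegrableOn F (Set.Iic (0 : ℝ)))
    (bα Mα : ℝ) (hbα : 0 < bα)
    (hgrowth : QuantileGrowth α F bα Mα)
    (G : ℝ → ℝ) (hG : IsCDF G) (hIntG : IntegrableOn G (Set.Iic (0 : ℝ)))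
    (hclose : (⨆ y : ℝ, |F y - G y|) < Mα) :
    |CVaR α G - CVaR α F + (1 / α) * ∫ y in Set.Iio (VaR α F), (G y - F y)| ≤
      (bα / α) * (⨆ y : ℝ, |F y - G y|) ^ 2 := by
  set ε := ⨆ y : ℝ, |F y - G y|
  have hFG : ∀ y, |F y - G y| ≤ ε := le_ciSup (hF.bddAbove_range_abs_sub hG)
  have hε : 0 ≤ ε := (abs_nonneg _).trans (hFG 0)
  have hVaR := hgrowth.abs_VaR_sub_VaR_le hF hG hα hbα hFG hclose
  rw [CVaR_sub_CVaR_add_integral_eq hα.1.ne' (hF.1.integrableOn_Iio_of_integrableOn_Iic hIntF _)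
      hG.1 (hG.1.integrableOn_Iio_of_integrableOn_Iic hIntG), abs_mul,
    abs_of_pos (one_div_pos.2 hα.1)]
  calc 1 / α * |∫ y in VaR α F..VaR α G, (α - G y)|
      ≤ 1 / α * (ε * (bα * ε)) := by
        gcongr
        · exact one_div_nonneg.2 hα.1.le
        · exact (hF.abs_integral_VaR_VaR_le hG hα hFG).trans (by gcongr)
    _ = bα / α * ε ^ 2 := by ring

/-- Smoothness of CVaR: under the quantile growth condition, the residual of
the first-order expansion of CVaR at `F` with linear term
`G ↦ (1/α)∫_{−∞}^{VaR_α(F)} (F − G)` is quadratic: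
`|CVaR_α(G) − CVaR_α(F) + (1/α)∫_{−∞}^{VaR_α(F)} (G − F)| ≤ (b_α/α)·(sup_y |F−G|)²`. -/
theorem CVaR_smoothness (α : ℝ) (hα : α ∈ Set.Ioo (0 : ℝ) 1)
    (F : ℝ → ℝ) (hF : IsCDF F) (hIntF : IntegrableOn F (Set.Iic (0 : ℝ)))
    (bα Mα : ℝ) (hbα : 0 < bα) (hMα : 0 < Mα)
    (hgrowth : QuantileGrowth α F bα Mα)
    (G : ℝ → ℝ) (hG : IsCDF G) (hIntG : IntegrableOn G (Set.Iic (0 : ℝ)))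
    (hclose : (⨆ y : ℝ, |F y - G y|) < Mα) :
    |CVaR α G - CVaR α F + (1 / α) * ∫ y in Set.Iio (VaR α F), (G y - F y)| ≤
      (bα / α) * (⨆ y : ℝ, |F y - G y|) ^ 2 :=
  CVaR_smoothness_general α hα F hF hIntF bα Mα hbα hgrowth G hG hIntG hclose
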